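/- If a permutation π fixes every free atom of a term r (π(a) = a for all a ∈ fa(r)), then π·r is α-equivalent to r. -/
import Mathlib


open Pointwise

abbrev Atom := ℤ
abbrev APerm := Equiv.Perm Atom

def Aneg : Set Atom := {a | a < 0}
def Apos : Set Atom := {a | 0 ≤ a}

/-- A finite permutation: moves only finitely many atoms. -/
def FinitePerm (π : APerm) : Prop := {a : Atom | π a ≠ a}.Finite

/-- A permission set: (A< ∪ P) \ Q with P ⊆ A>, Q ⊆ A< finite. -/
def IsPermissionSet (S : Set Atom) : Prop :=
  ∃ P Q : Finset Atom, (P : Set Atom) ⊆ Apos ∧ (Q : Set Atom) ⊆ Aneg ∧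
    S = (Aneg ∪ (P : Set Atom)) \ (Q : Set Atom)

/-- A set of atoms B supports x when every finite permutation fixing B pointwise fixes x. -/
def Supports {X : Type*} [MulAction APerm X] (B : Set Atom) (x : X) : Prop :=
  ∀ π : APerm, FinitePerm π → (∀ a ∈ B, π a = a) → π • x = x

/-- The least support: intersection of all supporting sets. -/
def supp {X : Type*} [MulAction APerm X] (x : X) : Set Atom :=
  ⋂₀ {B : Set Atom | Supports B x}

/-- A permissive-nominal set: every element is supported by some permission set. -/
def IsPNSet (X : Type*) [MulAction APerm X] : Prop :=
  ∀ x : X, ∃ S : Set Atom, IsPermissionSet S ∧ Supports S x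

/-- A permissive-nominal signature: term-formers and unknowns with permission sets. -/
structure Sig where
  TermFormer : Type
  Unknown : Type
  pmss : Unknown → Set Atom
  pmss_isPermissionSet : ∀ X, IsPermissionSet (pmss X)

/-- Raw permissive-nominal terms: atoms, tuples (built from unit and pairing),
term-former applications, atom-abstractions, and moderated unknowns π·X. -/
inductive PreTerm (σ : Sig) : Type
  | atom : Atom → PreTerm σ
  | unit : PreTerm σ
  | pair : PreTerm σ → PreTerm σ → PreTerm σ
  | app : σ.TermFormer → PreTerm σ → PreTerm σ
  | abs : Atom → PreTerm σ → PreTerm σ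
  | unk : APerm → σ.Unknown → PreTerm σ

namespace PreTerm

variable {σ : Sig}

/-- Free atoms of a term. -/
def fa : PreTerm σ → Set Atom
  | atom a => {a}
  | unit => ∅
  | pair r s => fa r ∪ fa s
  | app _ r => fa r
  | abs a r => fa r \ {a}
  | unk π X => (fun a => π a) '' σ.pmss X

/-- Permutation action on terms. -/
def pact (π : APerm) : PreTerm σ → PreTerm σ
  | atom a => atom (π a)
  | unit => unit
  | pair r s => pair (pact π r) (pact π s)
  | app f r => app f (pact π r)
  | abs a r => abs (π a) (pact π r)
  | unk π' X => unk (π * π') X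

/-- α-equivalence: the least congruence with [a]r ≈ [b]s when b ∉ fa r and
(b a)·r ≈ s, and π·X ≈ π'·X when π and π' agree on pmss X. -/
inductive Aeq : PreTerm σ → PreTerm σ → Prop
  | atom (a : Atom) : Aeq (atom a) (atom a)
  | unit : Aeq unit unit
  | pair {r r' s s' : PreTerm σ} : Aeq r r' → Aeq s s' → Aeq (pair r s) (pair r' s')
  | app (f : σ.TermFormer) {r s : PreTerm σ} : Aeq r s → Aeq (app f r) (app f s)
  | absCongr (a : Atom) {r s : PreTerm σ} : Aeq r s → Aeq (abs a r) (abs a s)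
  | abs (a b : Atom) {r s : PreTerm σ} : b ≠ a → b ∉ fa r →
      Aeq (pact (Equiv.swap b a) r) s → Aeq (abs a r) (abs b s)
  | unk (π π' : APerm) (X : σ.Unknown) :
      (∀ a ∈ σ.pmss X, π a = π' a) → Aeq (unk π X) (unk π' X)

end PreTerm

namespace PreTerm

lemma fa_pact {σ : Sig} (π : APerm) (r : PreTerm σ) :
    fa (pact π r) = (fun a => π a) '' fa r := by
  induction r with
  | atom a => simp [pact, fa]
  | unit => simp [pact, fa]
  | pair r s ihr ihs => simp [pact, fa, ihr, ihs, Set.image_union]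
  | app f r ih => simp [pact, fa, ih]
  | abs a r ih =>
      simp only [pact, fa, ih]
      rw [Set.image_diff (Equiv.injective π)]
      simp
  | unk π' X => simp [pact, fa, Set.image_image]

lemma pact_pact {σ : Sig} (π₁ π₂ : APerm) (r : PreTerm σ) :
    pact π₁ (pact π₂ r) = pact (π₁ * π₂) r := by
  induction r with
  | atom a => rfl
  | unit => rfl
  | pair r s ihr ihs => simp [pact, ihr, ihs]
  | app f r ih => simp [pact, ih]
  | abs a r ih => simp [pact, ih]
  | unk π' X => simp [pact, mul_assoc]

end PreTerm

/-- If π fixes every free atom of r, then π·r is α-equivalent to r. -/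
theorem stmt_13 {σ : Sig} (π : APerm) (r : PreTerm σ)
    (h : ∀ a ∈ PreTerm.fa r, π a = a) :
    PreTerm.Aeq (PreTerm.pact π r) r := by
  induction r generalizing π with
  | atom a =>
      have := h a (by simp [PreTerm.fa])
      simpa [PreTerm.pact, this] using PreTerm.Aeq.atom a
  | unit => exact PreTerm.Aeq.unit
  | pair r s ihr ihs =>
      exact PreTerm.Aeq.pair (ihr π fun a ha => h a (Or.inl ha))
        (ihs π fun a ha => h a (Or.inr ha))
  | app f r ih => exact PreTerm.Aeq.app f (ih π fun a ha => h a ha)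
  | abs a r ih =>
      by_cases hpa : π a = a
      · have : ∀ b ∈ PreTerm.fa r, π b = b := by
          intro b hb
          by_cases hba : b = a
          · rw [hba]; exact hpa
          · exact h b ⟨hb, hba⟩
        simpa [PreTerm.pact, hpa] using PreTerm.Aeq.absCongr a (ih π this)
      · have hfix : ∀ b ∈ PreTerm.fa r, b ≠ a → π b = b := fun b hb hba => h b ⟨hb, hba⟩
        have hnotin : a ∉ PreTerm.fa (PreTerm.pact π r) := by
          rw [PreTerm.fa_pact]
          rintro ⟨b, hb, hba⟩
          by_cases h' : b = a
          · exact hpa (h' ▸ hba)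
          · exact h' ((hfix b hb h').symm.trans hba)
        refine PreTerm.Aeq.abs (π a) a (fun hc => hpa hc.symm) hnotin ?_
        rw [PreTerm.pact_pact]
        apply ih
        intro b hb
        by_cases hba : b = a
        · simp [hba, Equiv.swap_apply_right]
        · have : π b = b := hfix b hb hba
          have hbpa : b ≠ π a := by
            intro he
            exact hba (π.injective (this.trans he))
          simp [this, Equiv.swap_apply_of_ne_of_ne hba hbpa]
  | unk π' X =>
      refine PreTerm.Aeq.unk _ _ X fun a ha => ?_
      exact h (π' a) ⟨a, ha, rfl⟩
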